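/- Let p be a prime such that 2 is a primitive root modulo p, let k ≥ 1, and let s be a binary sequence with period dividing p·2^k. Then there exists a binary sequence s' with period dividing p·2^{k−1} such that (1 + E + E² + ⋯ + E^{p−1})^{2^{k−1}} (E + 1)^{2^k} s = (E + 1)^{2^{k−1}} s'. -/

import Mathlib

/-!
With `m = 2 ^ (k - 1)`, the Frobenius identity in characteristic 2 gives
`(1 + E + ⋯ + E ^ (p - 1)) ^ m * (E + 1) ^ m = (E ^ p + 1) ^ m = E ^ (p * m) + 1`, so the left-hand
side equals `(E + 1) ^ m` applied to `s' = (E ^ (p * m) + 1) s`, and `s'` has period `p * m`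
because `s` has period `2 * p * m`.
-/

open Polynomial

noncomputable def polyApp (f : Polynomial (ZMod 2)) (s : ℕ → ZMod 2) : ℕ → ZMod 2 :=
  fun i => f.sum fun j c => c * s (i + j)

lemma polyApp_add (f g : Polynomial (ZMod 2)) (s : ℕ → ZMod 2) :
    polyApp (f + g) s = polyApp f s + polyApp g s := by
  funext i
  exact Polynomial.sum_add_index f g _ (fun _ => zero_mul _) (fun _ c d => add_mul c d _)

lemma polyApp_monomial (n : ℕ) (a : ZMod 2) (s : ℕ → ZMod 2) :
    polyApp (monomial n a) s = fun i => a * s (i + n) := by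
  funext i
  exact Polynomial.sum_monomial_index a _ (zero_mul _)

lemma polyApp_monomial_mul (n : ℕ) (a : ZMod 2) (g : Polynomial (ZMod 2)) (s : ℕ → ZMod 2) :
    polyApp (monomial n a * g) s = fun i => a * polyApp g s (i + n) := by
  induction g using Polynomial.induction_on' with
  | add q r hq hr =>
    funext i
    simp only [mul_add, polyApp_add, Pi.add_apply, hq, hr]
  | monomial m b =>
    simp only [monomial_mul_monomial, polyApp_monomial, ← add_assoc, mul_assoc]

lemma polyApp_mul (f g : Polynomial (ZMod 2)) (s : ℕ → ZMod 2) :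
    polyApp (f * g) s = polyApp f (polyApp g s) := by
  induction f using Polynomial.induction_on' with
  | add q r hq hr => rw [add_mul, polyApp_add, hq, hr, polyApp_add]
  | monomial n a => rw [polyApp_monomial_mul, polyApp_monomial]

lemma polyApp_X_pow_add_one (n : ℕ) (s : ℕ → ZMod 2) :
    polyApp (X ^ n + 1) s = fun i => s (i + n) + s i := by
  rw [← monomial_zero_one, X_pow_eq_monomial, polyApp_add, polyApp_monomial, polyApp_monomial]
  funext i
  simp

lemma geom_sum_mul_add_one_of_charTwo {R : Type*} [Ring R] [CharP R 2] (x : R) (n : ℕ) :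
    (∑ j ∈ Finset.range n, x ^ j) * (x + 1) = x ^ n + 1 := by
  simpa only [CharTwo.sub_eq_add] using geom_sum_mul x n

lemma geom_sum_pow_mul_add_one_pow_of_charTwo {R : Type*} [CommRing R] [CharP R 2]
    (x : R) (n e : ℕ) :
    (∑ j ∈ Finset.range n, x ^ j) ^ 2 ^ e * (x + 1) ^ 2 ^ e = x ^ (n * 2 ^ e) + 1 := by
  rw [← mul_pow, geom_sum_mul_add_one_of_charTwo, add_pow_char_pow, one_pow, pow_mul]

lemma add_shift_periodic {M : Type*} [AddCommSemigroup M] {s : ℕ → M} {N : ℕ}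
    (hper : ∀ i, s (i + (N + N)) = s i) (i : ℕ) :
    s (i + N + N) + s (i + N) = s (i + N) + s i := by
  rw [add_assoc, hper, add_comm]

theorem reduction_step_period_p_general
    (p : ℕ)
    (k : ℕ) (hk : 1 ≤ k)
    (s : ℕ → ZMod 2) (hper : ∀ i, s (i + p * 2 ^ k) = s i) :
    ∃ s' : ℕ → ZMod 2, (∀ i, s' (i + p * 2 ^ (k - 1)) = s' i) ∧
      polyApp ((∑ j ∈ Finset.range p, (X : Polynomial (ZMod 2)) ^ j) ^ (2 ^ (k - 1)) *
          (X + 1) ^ (2 ^ k)) s =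
        polyApp ((X + 1) ^ (2 ^ (k - 1))) s' := by
  set m := 2 ^ (k - 1)
  have hdouble : 2 ^ k = m + m := by
    rw [← two_mul, ← pow_succ', Nat.sub_add_cancel hk]
  have hfactor : (∑ j ∈ Finset.range p, (X : Polynomial (ZMod 2)) ^ j) ^ m * (X + 1) ^ 2 ^ k =
      (X + 1) ^ m * (X ^ (p * m) + 1) := by
    rw [← geom_sum_pow_mul_add_one_pow_of_charTwo, hdouble, pow_add]
    ring
  refine ⟨fun i => s (i + p * m) + s i, add_shift_periodic ?_, ?_⟩
  · rwa [← Nat.mul_add, ← hdouble]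
  · rw [hfactor, polyApp_mul, polyApp_X_pow_add_one]

theorem reduction_step_period_p
    (p : ℕ) (hp : p.Prime)
    (hgen : ∀ a : ZMod p, a ≠ 0 → ∃ n : ℕ, (2 : ZMod p) ^ n = a)
    (k : ℕ) (hk : 1 ≤ k)
    (s : ℕ → ZMod 2) (hper : ∀ i, s (i + p * 2 ^ k) = s i) :
    ∃ s' : ℕ → ZMod 2, (∀ i, s' (i + p * 2 ^ (k - 1)) = s' i) ∧
      polyApp ((∑ j ∈ Finset.range p, (X : Polynomial (ZMod 2)) ^ j) ^ (2 ^ (k - 1)) *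
          (X + 1) ^ (2 ^ k)) s =
        polyApp ((X + 1) ^ (2 ^ (k - 1))) s' :=
  reduction_step_period_p_general p k hk s hper
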